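/- arXiv:cond-mat/0508600 — 3 statements merged into one kernel-verified Lean document; each statement's English description precedes it below -/
import Mathlib

section
/- Fix a positive integer k and let E_k denote expectation with respect to the uniform measure on k-tuples of spin configurations σ^(1),…,σ^(k) ∈ {−1,+1}^n. Define the pairwise overlaps q_{ij} = (1/n) Σ_{s=1}^n σ_s^(i) σ_s^(j) and q_max = max_{i≠j} |q_{ij}|. Then for any β ≥ 0 with k(k−1)β < n and any function g on k-tuples of configurations satisfying |g(σ^(1),…,σ^(k))| ≤ β q_max², one has (1 − k(k−1)β/(2n)) ≤ E_k[exp(g)] ≤ (1 − k(k−1)β/n)^{−1/2}. -/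
open Finset

/-- The map sending a Boolean to the spin value `±1`. -/
noncomputable def spin (b : Bool) : ℝ := if b then 1 else -1

/-- The overlap `q(σ,σ') = (1/n) ∑_s σ_s σ'_s` of two spin configurations. -/
noncomputable def overlap {n : ℕ} (σ τ : Fin n → Bool) : ℝ :=
  (n : ℝ)⁻¹ * ∑ s, spin (σ s) * spin (τ s)

/-- The maximal off-diagonal overlap `q_max = max_{i≠j} |q_{ij}|` of a `k`-tuple of
spin configurations (equal to `0` when `k = 1`). -/
noncomputable def qmax {k n : ℕ} (σ : Fin k → Fin n → Bool) : ℝ :=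
  ((Finset.univ : Finset (Fin k)).offDiag.sup
    fun p => Real.toNNReal |overlap (σ p.1) (σ p.2)| : NNReal)

/-! Since `q_max² ≤ ½ ∑_{i≠j} q_{ij}²`, it suffices to control one overlap at a time, and for
`i ≠ j` the overlap `q_{ij}` is distributed like the magnetization `m = n⁻¹ ∑_s ε_s` of a single
uniform configuration `ε`, because `σ^(j) ↦ σ^(i) σ^(j)` is a bijection. The lower bound then
follows from `exp g ≥ 1 + g` and `E[m²] = 1/n`. For the upper bound, Jensen's inequality over the
`k(k-1)` ordered pairs reduces everything to `E[exp(t m²)]` with `t = k(k-1)β/2`. Writing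
`exp(a²/2)` as a Gaussian average of `exp(a x)` and bounding `E[exp(c x ∑_s ε_s)] = cosh(c x)ⁿ` by
`exp(n c² x²/2)` leaves the Gaussian integral `∫ exp(-(1 - 2t/n) x²/2) dx`. -/

open Finset Real MeasureTheory Function
open scoped BigOperators

section Expect
variable {ι X M : Type*} [Fintype ι] [DecidableEq ι] [Fintype X] [AddCommMonoid M]
  [Module ℚ≥0 M]

lemma Fintype.expect_comp_eval (j : ι) (F : X → M) : 𝔼 σ : ι → X, F (σ j) = 𝔼 x, F x := by
  cases isEmpty_or_nonempty X with
  | inl _ =>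
    have : IsEmpty (ι → X) := ⟨fun σ => isEmptyElim (σ j)⟩
    simp
  | inr _ =>
    rw [Fintype.expect_equiv (Equiv.piSplitAt j fun _ => X) (fun σ => F (σ j)) (fun p => F p.1)
      (fun _ => rfl), ← univ_product_univ, expect_product]
    simp

lemma Fintype.expect_comp_pair_of_injective {i j : ι} (hij : i ≠ j) (f : X → X → X)
    (hf : ∀ x, Injective (f x)) (F : X → M) :
    𝔼 σ : ι → X, F (f (σ i) (σ j)) = 𝔼 x, F x := by
  set e : (ι → X) → ι → X := fun σ => update σ j (f (σ i) (σ j))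
  have he : Injective e := by
    intro σ τ h
    have hi : σ i = τ i := by simpa [e, update_of_ne hij] using congrFun h i
    have hj : σ j = τ j := hf (σ i) (by simpa [e, hi] using congrFun h j)
    funext l
    by_cases hl : l = j
    · subst hl; exact hj
    · simpa [e, update_of_ne hl] using congrFun h l
  rw [Fintype.expect_bijective e (Finite.injective_iff_bijective.1 he) _ (fun σ => F (σ j))
    (fun σ => by simp [e]), Fintype.expect_comp_eval]

end Expect

lemma exp_expect_le_expect_exp {ι : Type*} {s : Finset ι} (hs : s.Nonempty) (y : ι → ℝ) :
    exp (𝔼 i ∈ s, y i) ≤ 𝔼 i ∈ s, exp (y i) := by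
  have hw : ∑ _i ∈ s, (#s : ℝ)⁻¹ = 1 := by
    rw [sum_const, nsmul_eq_mul, mul_inv_cancel₀ (by exact_mod_cast hs.card_pos.ne')]
  simpa [expect_eq_sum_div_card, div_eq_inv_mul, mul_sum] using
    convexOn_exp.map_sum_le (fun _ _ => by positivity) hw (fun i _ => Set.mem_univ (y i))

lemma exp_mul_sub_sq_div_two (a x : ℝ) :
    exp (a * x - x ^ 2 / 2) = exp (a ^ 2 / 2) * exp (-(1 / 2) * (x - a) ^ 2) := by
  rw [← exp_add]
  ring_nf

lemma integrable_exp_mul_sub_sq_div_two (a : ℝ) :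
    Integrable fun x => exp (a * x - x ^ 2 / 2) := by
  simp_rw [exp_mul_sub_sq_div_two]
  exact ((integrable_exp_neg_mul_sq one_half_pos).comp_sub_right a).const_mul _

lemma integral_exp_mul_sub_sq_div_two (a : ℝ) :
    ∫ x, exp (a * x - x ^ 2 / 2) = √(2 * π) * exp (a ^ 2 / 2) := by
  simp_rw [exp_mul_sub_sq_div_two]
  rw [integral_const_mul, integral_sub_right_eq_self (fun x => exp (-(1 / 2) * x ^ 2)) a,
    integral_gaussian, mul_comm]
  norm_num [div_div_eq_mul_div, mul_comm]

theorem expect_exp_sq_div_two_le {ι : Type*} (s : Finset ι) (a : ι → ℝ) {b : ℝ} (hb : b < 1)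
    (h : ∀ x, 𝔼 i ∈ s, exp (a i * x) ≤ exp (b * x ^ 2 / 2)) :
    𝔼 i ∈ s, exp (a i ^ 2 / 2) ≤ (1 - b) ^ (-(1 / 2) : ℝ) := by
  have hb' : 0 < 1 - b := by linarith
  have hπ : 0 < √(2 * π) := by positivity
  calc 𝔼 i ∈ s, exp (a i ^ 2 / 2)
      = (√(2 * π))⁻¹ * ∫ x, 𝔼 i ∈ s, exp (a i * x - x ^ 2 / 2) := by
        simp_rw [expect_eq_sum_div_card, integral_div]
        rw [integral_finsetSum _ fun i _ => integrable_exp_mul_sub_sq_div_two (a i)]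
        simp_rw [integral_exp_mul_sub_sq_div_two, ← mul_sum]
        field_simp
    _ ≤ (√(2 * π))⁻¹ * ∫ x, exp (-((1 - b) / 2) * x ^ 2) := by
        refine mul_le_mul_of_nonneg_left (integral_mono_of_nonneg
          (ae_of_all _ fun x => expect_nonneg fun i _ => (exp_pos _).le)
          (integrable_exp_neg_mul_sq (by linarith)) (ae_of_all _ fun x => ?_)) (by positivity)
        simp_rw [sub_eq_add_neg, exp_add, ← expect_mul]
        calc (𝔼 i ∈ s, exp (a i * x)) * exp (-(x ^ 2 / 2))
            ≤ exp (b * x ^ 2 / 2) * exp (-(x ^ 2 / 2)) := by gcongr; exact h x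
          _ = exp (-((1 - b) / 2) * x ^ 2) := by rw [← exp_add]; ring_nf
    _ = (1 - b) ^ (-(1 / 2) : ℝ) := by
        rw [integral_gaussian, rpow_neg hb'.le, ← sqrt_eq_rpow, div_div_eq_mul_div,
          sqrt_div' _ hb'.le, mul_comm π]
        field_simp

lemma spin_mul_spin (a b : Bool) : spin a * spin b = spin (a == b) := by
  cases a <;> cases b <;> norm_num [spin]

lemma expect_spin : 𝔼 b, spin b = 0 := by
  rw [Finset.expect_eq_sum_div_card, Fintype.sum_bool]
  norm_num [spin]

lemma Bool.beq_right_injective (a : Bool) : Injective (a == ·) := by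
  cases a <;> decide

section Spins
variable {ι : Type*} [Fintype ι] [DecidableEq ι]

lemma expect_spin_mul_spin (s t : ι) :
    𝔼 ε : ι → Bool, spin (ε s) * spin (ε t) = if s = t then 1 else 0 := by
  simp_rw [spin_mul_spin]
  split_ifs with hst
  · simp [hst, spin]
  · rw [Fintype.expect_comp_pair_of_injective hst (· == ·) Bool.beq_right_injective spin,
      expect_spin]

lemma expect_exp_sum_mul_spin (t : ι → ℝ) :
    𝔼 ε : ι → Bool, exp (∑ s, t s * spin (ε s)) = ∏ s, cosh (t s) := by
  have hbool (x : ℝ) : ∑ b : Bool, exp (x * spin b) = 2 * cosh x := by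
    simp [spin, cosh_eq]
    ring
  rw [Finset.expect_eq_sum_div_card]
  simp_rw [Real.exp_sum]
  rw [← Fintype.prod_sum (fun s b => exp (t s * spin b))]
  simp_rw [hbool]
  rw [prod_mul_distrib, prod_const, card_univ, card_univ, Fintype.card_fun, Fintype.card_bool]
  push_cast
  field_simp

lemma expect_exp_sum_mul_spin_le (t : ι → ℝ) :
    𝔼 ε : ι → Bool, exp (∑ s, t s * spin (ε s)) ≤ exp (∑ s, t s ^ 2 / 2) := by
  rw [expect_exp_sum_mul_spin, exp_sum]
  exact prod_le_prod (fun s _ => (cosh_pos _).le) (fun s _ => cosh_le_exp_half_sq _)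

end Spins

noncomputable def magnetization {n : ℕ} (ε : Fin n → Bool) : ℝ :=
  (n : ℝ)⁻¹ * ∑ s, spin (ε s)

lemma expect_magnetization_sq (n : ℕ) :
    𝔼 ε : Fin n → Bool, magnetization ε ^ 2 = (n : ℝ)⁻¹ := by
  simp_rw [magnetization, mul_pow, sq (∑ s, _), sum_mul_sum, ← mul_expect, expect_sum_comm,
    expect_spin_mul_spin, sum_ite_eq, if_pos (mem_univ _), sum_const, card_univ,
    Fintype.card_fin, nsmul_eq_mul, mul_one]
  rcases eq_or_ne (n : ℝ) 0 with hn | hn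
  · simp [hn]
  · field_simp

theorem expect_exp_mul_magnetization_sq_le {n : ℕ} {t : ℝ} (ht : 0 ≤ t) (htn : 2 * t < n) :
    𝔼 ε : Fin n → Bool, exp (t * magnetization ε ^ 2) ≤ (1 - 2 * t / n) ^ (-(1 / 2) : ℝ) := by
  have hn : (0 : ℝ) < n := by linarith
  set c := √(2 * t) / n
  have hc : c ^ 2 = 2 * t / n ^ 2 := by rw [div_pow, sq_sqrt (by linarith)]
  have hsq (ε : Fin n → Bool) : t * magnetization ε ^ 2 = (c * ∑ s, spin (ε s)) ^ 2 / 2 := by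
    rw [mul_pow, hc, magnetization]
    field_simp
  simp_rw [hsq]
  refine expect_exp_sq_div_two_le _ _ ((div_lt_one hn).2 htn) fun x => ?_
  calc 𝔼 ε : Fin n → Bool, exp (c * (∑ s, spin (ε s)) * x)
      = 𝔼 ε : Fin n → Bool, exp (∑ s, c * x * spin (ε s)) := by
        simp_rw [mul_sum, sum_mul, mul_right_comm c]
    _ ≤ exp (∑ _s : Fin n, (c * x) ^ 2 / 2) := expect_exp_sum_mul_spin_le _
    _ = exp (2 * t / n * x ^ 2 / 2) := by
        rw [sum_const, card_univ, Fintype.card_fin, nsmul_eq_mul, mul_pow, hc]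
        field_simp

lemma overlap_comm {n : ℕ} (σ τ : Fin n → Bool) : overlap σ τ = overlap τ σ := by
  simp only [overlap, mul_comm (spin (σ _))]

lemma overlap_eq_magnetization {n : ℕ} (σ τ : Fin n → Bool) :
    overlap σ τ = magnetization fun s => σ s == τ s := by
  simp only [overlap, magnetization, spin_mul_spin]

lemma expect_comp_overlap {k n : ℕ} {i j : Fin k} (hij : i ≠ j) (F : ℝ → ℝ) :
    𝔼 σ : Fin k → Fin n → Bool, F (overlap (σ i) (σ j)) =
      𝔼 ε : Fin n → Bool, F (magnetization ε) := by
  simp_rw [overlap_eq_magnetization]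
  exact Fintype.expect_comp_pair_of_injective hij (fun σ τ : Fin n → Bool => fun s => σ s == τ s)
    (fun σ _ _ h => funext fun s => Bool.beq_right_injective (σ s) (congrFun h s))
    (fun ε => F (magnetization ε))

lemma card_offDiag_univ_fin (k : ℕ) : (#(univ : Finset (Fin k)).offDiag : ℝ) = k * (k - 1) := by
  rw [offDiag_card, card_univ, Fintype.card_fin, Nat.cast_sub (Nat.le_mul_self k)]
  push_cast
  ring

lemma expect_sum_overlap_sq (k n : ℕ) :
    𝔼 σ : Fin k → Fin n → Bool,
      ∑ p ∈ (univ : Finset (Fin k)).offDiag, overlap (σ p.1) (σ p.2) ^ 2 = k * (k - 1) / n := by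
  rw [expect_sum_comm,
    sum_congr rfl fun p hp => expect_comp_overlap (mem_offDiag.1 hp).2.2 (· ^ 2),
    expect_magnetization_sq, sum_const, nsmul_eq_mul, card_offDiag_univ_fin, div_eq_mul_inv]

lemma sq_le_sum_offDiag_div_two {α : Type*} [DecidableEq α] {s : Finset α} {f : α → α → ℝ}
    (hf : ∀ x y, f x y = f y x) {p : α × α} (hp : p ∈ s.offDiag) :
    f p.1 p.2 ^ 2 ≤ (∑ q ∈ s.offDiag, f q.1 q.2 ^ 2) / 2 := by
  have hswap : p.swap ∈ s.offDiag := by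
    simp only [mem_offDiag] at hp ⊢
    exact ⟨hp.2.1, hp.1, hp.2.2.symm⟩
  have hne : p ≠ p.swap := fun h => (mem_offDiag.1 hp).2.2 (congrArg Prod.fst h)
  have := add_le_sum (fun q _ => sq_nonneg (f q.1 q.2)) hp hswap hne
  rw [Prod.fst_swap, Prod.snd_swap, hf p.2 p.1] at this
  linarith

lemma qmax_sq_le_sum_overlap_sq_div_two {k n : ℕ} (σ : Fin k → Fin n → Bool) :
    qmax σ ^ 2 ≤ (∑ p ∈ (univ : Finset (Fin k)).offDiag, overlap (σ p.1) (σ p.2) ^ 2) / 2 := by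
  set T := (∑ p ∈ (univ : Finset (Fin k)).offDiag, overlap (σ p.1) (σ p.2) ^ 2) / 2
  have hle : qmax σ ≤ √T := by
    rw [qmax, ← coe_toNNReal _ (sqrt_nonneg T), NNReal.coe_le_coe]
    refine Finset.sup_le fun p hp => toNNReal_le_toNNReal (abs_le_sqrt ?_)
    exact sq_le_sum_offDiag_div_two (f := fun a b => overlap (σ a) (σ b))
      (fun _ _ => overlap_comm _ _) hp
  calc qmax σ ^ 2 ≤ √T ^ 2 := pow_le_pow_left₀ (NNReal.coe_nonneg _) hle 2
    _ = T := sq_sqrt (by positivity)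

theorem one_sub_le_expect_exp_of_abs_le_qmax_sq {k n : ℕ} {β : ℝ} (hβ : 0 ≤ β)
    {g : (Fin k → Fin n → Bool) → ℝ} (hg : ∀ σ, |g σ| ≤ β * qmax σ ^ 2) :
    1 - k * (k - 1) * β / (2 * n) ≤ 𝔼 σ, exp (g σ) :=
  calc 1 - k * (k - 1) * β / (2 * n)
      = 𝔼 σ : Fin k → Fin n → Bool,
          (1 - β * ((∑ p ∈ (univ : Finset (Fin k)).offDiag, overlap (σ p.1) (σ p.2) ^ 2) / 2)) := by
        rw [expect_sub_distrib, expect_const univ_nonempty, ← mul_expect, ← expect_div,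
          expect_sum_overlap_sq]
        ring
    _ ≤ 𝔼 σ, exp (g σ) := expect_le_expect fun σ _ => by
        have := mul_le_mul_of_nonneg_left (qmax_sq_le_sum_overlap_sq_div_two σ) hβ
        linarith [neg_abs_le (g σ), hg σ, add_one_le_exp (g σ)]

theorem expect_exp_le_of_abs_le_qmax_sq {k n : ℕ} {β : ℝ} (hβ : 0 ≤ β)
    (hβn : k * (k - 1) * β < n) {g : (Fin k → Fin n → Bool) → ℝ}
    (hg : ∀ σ, |g σ| ≤ β * qmax σ ^ 2) :
    𝔼 σ, exp (g σ) ≤ (1 - k * (k - 1) * β / n) ^ (-(1 / 2) : ℝ) := by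
  set P := (univ : Finset (Fin k)).offDiag
  have hgle (σ : Fin k → Fin n → Bool) :
      g σ ≤ β * ((∑ p ∈ P, overlap (σ p.1) (σ p.2) ^ 2) / 2) :=
    (le_abs_self _).trans
      ((hg σ).trans (mul_le_mul_of_nonneg_left (qmax_sq_le_sum_overlap_sq_div_two σ) hβ))
  rcases P.eq_empty_or_nonempty with hP | hP
  · have hk : (k : ℝ) * (k - 1) = 0 := by
      rw [← card_offDiag_univ_fin]
      change (#P : ℝ) = 0
      simp [hP]
    rw [hk, zero_mul, zero_div, sub_zero, one_rpow]
    refine expect_le univ_nonempty fun σ _ => exp_le_one_iff.2 ?_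
    simpa [hP] using hgle σ
  set t := #P * β / 2
  have ht : 2 * t = k * (k - 1) * β := by rw [← card_offDiag_univ_fin]; ring
  have hjensen (σ : Fin k → Fin n → Bool) :
      exp (g σ) ≤ 𝔼 p ∈ P, exp (t * overlap (σ p.1) (σ p.2) ^ 2) := by
    refine (exp_le_exp.2 (hgle σ)).trans (le_trans (le_of_eq ?_) (exp_expect_le_expect_exp hP _))
    have hPc : (#P : ℝ) ≠ 0 := by exact_mod_cast hP.card_pos.ne'
    rw [← mul_expect, expect_eq_sum_div_card]
    simp only [t]
    field_simp
  calc 𝔼 σ, exp (g σ)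
      ≤ 𝔼 σ : Fin k → Fin n → Bool, 𝔼 p ∈ P, exp (t * overlap (σ p.1) (σ p.2) ^ 2) :=
        expect_le_expect fun σ _ => hjensen σ
    _ = 𝔼 p ∈ P, 𝔼 ε : Fin n → Bool, exp (t * magnetization ε ^ 2) := by
        rw [expect_comm]
        exact expect_congr rfl fun p hp =>
          expect_comp_overlap (mem_offDiag.1 hp).2.2 fun q => exp (t * q ^ 2)
    _ ≤ (1 - k * (k - 1) * β / n) ^ (-(1 / 2) : ℝ) := by
        rw [← ht]
        exact expect_le hP fun _ _ =>
          expect_exp_mul_magnetization_sq_le (by positivity) (by linarith)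

theorem exp_overlap_bound_general (k n : ℕ) (β : ℝ) (hβ : 0 ≤ β)
    (hβn : (k : ℝ) * ((k : ℝ) - 1) * β < n)
    (g : (Fin k → Fin n → Bool) → ℝ)
    (hg : ∀ σ, |g σ| ≤ β * (qmax σ) ^ 2) :
    1 - (k : ℝ) * ((k : ℝ) - 1) * β / (2 * n)
        ≤ ((2 : ℝ) ^ (n * k))⁻¹ * ∑ σ : Fin k → Fin n → Bool, Real.exp (g σ) ∧
    ((2 : ℝ) ^ (n * k))⁻¹ * ∑ σ : Fin k → Fin n → Bool, Real.exp (g σ)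
        ≤ (1 - (k : ℝ) * ((k : ℝ) - 1) * β / n) ^ (-(1 / 2) : ℝ) := by
  have hmean : ((2 : ℝ) ^ (n * k))⁻¹ * ∑ σ : Fin k → Fin n → Bool, exp (g σ)
      = 𝔼 σ, exp (g σ) := by
    rw [expect_eq_sum_div_card, card_univ, Fintype.card_fun, Fintype.card_fun, Fintype.card_fin,
      Fintype.card_fin, Fintype.card_bool, pow_mul, inv_mul_eq_div]
    push_cast
    rfl
  rw [hmean]
  exact ⟨one_sub_le_expect_exp_of_abs_le_qmax_sq hβ hg, expect_exp_le_of_abs_le_qmax_sq hβ hβn hg⟩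

/-- For any `β ≥ 0` with `k(k−1)β < n` and any function `g` on `k`-tuples of
configurations with `|g| ≤ β q_max²`, the uniform average of `exp(g)` satisfies
`1 − k(k−1)β/(2n) ≤ E_k[exp g] ≤ (1 − k(k−1)β/n)^{−1/2}`. -/
theorem exp_overlap_bound (k n : ℕ) (hk : 0 < k) (hn : 0 < n) (β : ℝ) (hβ : 0 ≤ β)
    (hβn : (k : ℝ) * ((k : ℝ) - 1) * β < n)
    (g : (Fin k → Fin n → Bool) → ℝ)
    (hg : ∀ σ, |g σ| ≤ β * (qmax σ) ^ 2) :
    1 - (k : ℝ) * ((k : ℝ) - 1) * β / (2 * n)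
        ≤ ((2 : ℝ) ^ (n * k))⁻¹ * ∑ σ : Fin k → Fin n → Bool, Real.exp (g σ) ∧
    ((2 : ℝ) ^ (n * k))⁻¹ * ∑ σ : Fin k → Fin n → Bool, Real.exp (g σ)
        ≤ (1 - (k : ℝ) * ((k : ℝ) - 1) * β / n) ^ (-(1 / 2) : ℝ) :=
  exp_overlap_bound_general k n β hβ hβn g hg
end

section
/- Fix a positive integer k and a sequence β_n ≥ 0 with β_n = o(n). Let E_k denote expectation over uniformly random σ^(1),…,σ^(k) ∈ {−1,+1}^n with off-diagonal overlaps q̃_{ij} as above. Then E_k[exp(β_n Σ_{i≠j} q̃_{ij})] = exp( (k(k−1)/n) β_n² + O(β_n³ n^{−2}) ). -/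
open Filter

/-!
Writing `S_s = ∑_i σ^(i)_s` for the column sums, `∑_{i≠j} q̃_{ij} = (1/n) ∑_s S_s² - k` because
`q_{ii} = 1`, and the columns of `σ` are independent, so the expectation factorises as
`e^{-kβ} M(β/n)^n` with `M(t) = E[exp(t S²)]` for `S` a sum of `k` independent signs.
The moments `E S² = k` and `E S⁴ = 3k² - 2k` give `M(t) = 1 + kt + (3k² - 2k) t²/2 + O(t³)`,
hence `log M(t) = kt + k(k - 1) t² + O(t³)`; at `t = β/n → 0` the linear term cancels `e^{-kβ}`
and `n · O(t³) = O(β³/n²)`.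
-/

open Finset Asymptotics Topology Real

noncomputable def spinSum {k : ℕ} (δ : Fin k → Bool) : ℝ := ∑ i, spin (δ i)

noncomputable def mgfSpinSumSq (k : ℕ) (t : ℝ) : ℝ :=
  (2 ^ k : ℝ)⁻¹ * ∑ δ : Fin k → Bool, exp (t * spinSum δ ^ 2)

lemma spin_mul_self (b : Bool) : spin b * spin b = 1 := by
  cases b <;> simp [spin]

lemma Fintype.sum_fin_succ_pi {M α : Type*} [AddCommMonoid M] [Fintype α] {k : ℕ}
    (f : (Fin (k + 1) → α) → M) :
    ∑ δ, f δ = ∑ a, ∑ δ : Fin k → α, f (Fin.cons a δ) := by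
  rw [← (Fin.consEquiv fun _ => α).sum_comp f, Fintype.sum_prod_type]
  rfl

lemma spinSum_cons {k : ℕ} (b : Bool) (δ : Fin k → Bool) :
    spinSum (Fin.cons b δ : Fin (k + 1) → Bool) = spin b + spinSum δ := by
  simp [spinSum, Fin.sum_univ_succ]

lemma sum_comp_spinSum_succ {M : Type*} [AddCommMonoid M] (k : ℕ) (f : ℝ → M) :
    ∑ δ : Fin (k + 1) → Bool, f (spinSum δ)
      = ∑ δ : Fin k → Bool, (f (spinSum δ + 1) + f (spinSum δ - 1)) := by
  rw [Fintype.sum_fin_succ_pi, Fintype.sum_bool, ← sum_add_distrib]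
  refine sum_congr rfl fun δ _ => ?_
  simp only [spinSum_cons, spin, if_true, Bool.false_eq_true, if_false]
  rw [add_comm (1 : ℝ), neg_add_eq_sub]

lemma sum_fin_bool_const (k : ℕ) (c : ℝ) : ∑ _δ : Fin k → Bool, c = 2 ^ k * c := by
  simp

lemma sum_spinSum_sq (k : ℕ) : ∑ δ : Fin k → Bool, spinSum δ ^ 2 = k * 2 ^ k := by
  induction k with
  | zero => simp [spinSum]
  | succ k ih =>
    calc ∑ δ : Fin (k + 1) → Bool, spinSum δ ^ 2
        = ∑ δ : Fin k → Bool, (2 * spinSum δ ^ 2 + 2) := by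
          rw [sum_comp_spinSum_succ k (· ^ 2)]
          exact sum_congr rfl fun δ _ => by ring
      _ = (k + 1 : ℕ) * 2 ^ (k + 1) := by
          rw [sum_add_distrib, ← mul_sum, ih, sum_fin_bool_const]
          push_cast
          ring

lemma sum_spinSum_pow_four (k : ℕ) :
    ∑ δ : Fin k → Bool, spinSum δ ^ 4 = (3 * k ^ 2 - 2 * k) * 2 ^ k := by
  induction k with
  | zero => simp [spinSum]
  | succ k ih =>
    calc ∑ δ : Fin (k + 1) → Bool, spinSum δ ^ 4
        = ∑ δ : Fin k → Bool, (2 * spinSum δ ^ 4 + 12 * spinSum δ ^ 2 + 2) := by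
          rw [sum_comp_spinSum_succ k (· ^ 4)]
          exact sum_congr rfl fun δ _ => by ring
      _ = (3 * (k + 1 : ℕ) ^ 2 - 2 * (k + 1 : ℕ)) * 2 ^ (k + 1) := by
          rw [sum_add_distrib, sum_add_distrib, ← mul_sum, ← mul_sum, ih, sum_spinSum_sq,
            sum_fin_bool_const]
          push_cast
          ring

lemma exp_mul_sub_taylor_isBigO (c : ℝ) :
    (fun t => exp (t * c) - (1 + t * c + (t * c) ^ 2 / 2)) =O[𝓝 0] fun t => t ^ 3 := by
  have hc : Tendsto (fun t : ℝ => t * c) (𝓝 0) (𝓝 0) := by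
    simpa using (tendsto_id (x := 𝓝 (0 : ℝ))).mul_const c
  refine ((exp_sub_sum_range_isBigO_pow 3).comp_tendsto hc |>.congr_left fun t => ?_).trans ?_
  · simp [sum_range_succ]
  · simpa [Function.comp_def, mul_pow, mul_comm] using
      (isBigO_refl (fun t : ℝ => t ^ 3) _).const_mul_left (c ^ 3)

lemma mgfSpinSumSq_sub_isBigO (k : ℕ) :
    (fun t => mgfSpinSumSq k t - (1 + k * t + (3 * k ^ 2 - 2 * k) / 2 * t ^ 2))
      =O[𝓝 0] fun t => t ^ 3 := by
  have h := (IsBigO.fun_sum fun δ (_ : δ ∈ (univ : Finset (Fin k → Bool))) =>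
    exp_mul_sub_taylor_isBigO (spinSum δ ^ 2)).const_mul_left ((2 : ℝ) ^ k)⁻¹
  refine h.congr_left fun t => ?_
  have hmom2 : ∑ δ : Fin k → Bool, t * spinSum δ ^ 2 = t * (k * 2 ^ k) := by
    rw [← mul_sum, sum_spinSum_sq]
  have hmom4 : ∑ δ : Fin k → Bool, (t * spinSum δ ^ 2) ^ 2 / 2
      = t ^ 2 / 2 * ((3 * k ^ 2 - 2 * k) * 2 ^ k) := by
    simp only [mul_pow, ← pow_mul, ← sum_spinSum_pow_four, mul_sum]
    exact sum_congr rfl fun _ _ => by ring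
  rw [sum_sub_distrib, sum_add_distrib, sum_add_distrib, hmom2, hmom4, sum_fin_bool_const,
    mgfSpinSumSq]
  field_simp

lemma log_one_add_sub_isBigO :
    (fun u => log (1 + u) - (u - u ^ 2 / 2)) =O[𝓝 0] fun u => u ^ 3 := by
  refine IsBigO.of_bound 2 ?_
  filter_upwards [Metric.ball_mem_nhds (0 : ℝ) (by norm_num : (0 : ℝ) < 1 / 2)] with u hu
  rw [Metric.mem_ball, dist_zero_right, norm_eq_abs] at hu
  have h := abs_log_sub_add_sum_range_le (x := -u) (by rw [abs_neg]; linarith) 2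
  norm_num [sum_range_succ] at h
  rw [norm_eq_abs, norm_eq_abs, abs_pow]
  calc |log (1 + u) - (u - u ^ 2 / 2)|
      = |-u + u ^ 2 / 2 + log (1 + u)| := by ring_nf
    _ ≤ |u| ^ 3 / (1 - |u|) := h
    _ ≤ 2 * |u| ^ 3 := by
        rw [div_le_iff₀ (by linarith)]
        nlinarith [pow_nonneg (abs_nonneg u) 3]

lemma log_one_add_sub_isBigO_of_sub_isBigO {u : ℝ → ℝ} {b c : ℝ}
    (hu : (fun t => u t - (b * t + c * t ^ 2)) =O[𝓝 0] fun t => t ^ 3) :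
    (fun t => log (1 + u t) - (b * t + (c - b ^ 2 / 2) * t ^ 2)) =O[𝓝 0] fun t => t ^ 3 := by
  have hpow : ∀ {m n : ℕ}, m < n → (fun t : ℝ => t ^ n) =O[𝓝 0] fun t => t ^ m :=
    fun h => (isLittleO_pow_pow h).isBigO
  have hlin : (fun t => u t - b * t) =O[𝓝 0] fun t => t ^ 2 :=
    ((hu.trans (hpow (by norm_num))).add ((isBigO_refl _ _).const_mul_left c)).congr_left
      fun t => by ring
  have hu1 : u =O[𝓝 0] fun t => t ^ 1 :=
    ((hlin.trans (hpow (by norm_num))).add ((isBigO_refl _ _).const_mul_left b)).congr_left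
      fun t => by ring
  have hu0 : Tendsto u (𝓝 0) (𝓝 0) :=
    hu1.trans_tendsto (by simpa using (continuous_pow 1).tendsto (0 : ℝ))
  have hlog := (log_one_add_sub_isBigO.comp_tendsto hu0).trans
    (by simpa [Function.comp_def, ← pow_mul] using hu1.pow 3)
  have hsq : (fun t => u t ^ 2 - (b * t) ^ 2) =O[𝓝 0] fun t => t ^ 3 := by
    have hb : (fun t => b * t) =O[𝓝 0] fun t => t ^ 1 :=
      (isBigO_refl _ _).const_mul_left b |>.congr_right fun t => (pow_one t).symm
    exact ((hlin.mul (hu1.add hb)).congr_left fun t => by ring).congr_right fun t => by ring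
  -- `log (1 + u) - (b t + (c - b²/2) t²)`
  --   `= (log (1 + u) - (u - u²/2)) + (u - (b t + c t²)) - (u² - (b t)²)/2`
  refine ((hlog.add hu).sub (hsq.const_mul_left (1 / 2))).congr_left fun t => ?_
  simp only [Function.comp_apply]
  ring

lemma log_mgfSpinSumSq_sub_isBigO (k : ℕ) :
    (fun t => log (mgfSpinSumSq k t) - (k * t + k * (k - 1) * t ^ 2)) =O[𝓝 0]
      fun t => t ^ 3 := by
  have h := log_one_add_sub_isBigO_of_sub_isBigO (u := fun t => mgfSpinSumSq k t - 1) (b := k)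
    (c := (3 * k ^ 2 - 2 * k) / 2)
    ((mgfSpinSumSq_sub_isBigO k).congr_left fun t => by ring)
  refine h.congr_left fun t => ?_
  rw [add_sub_cancel]
  ring

lemma mgfSpinSumSq_pos (k : ℕ) (t : ℝ) : 0 < mgfSpinSumSq k t := by
  unfold mgfSpinSumSq
  positivity

lemma overlap_self {n : ℕ} (hn : n ≠ 0) (σ : Fin n → Bool) : overlap σ σ = 1 := by
  simp [overlap, spin_mul_self, hn]

lemma sum_sum_overlap {k n : ℕ} (σ : Fin k → Fin n → Bool) :
    ∑ i, ∑ j, overlap (σ i) (σ j) = (n : ℝ)⁻¹ * ∑ s, spinSum (fun i => σ i s) ^ 2 := by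
  simp only [overlap, ← mul_sum]
  simp only [spinSum, sq, sum_mul_sum]
  rw [sum_congr rfl fun i _ => sum_comm, sum_comm]

lemma sum_offDiag_overlap {k n : ℕ} (hn : n ≠ 0) (σ : Fin k → Fin n → Bool) :
    ∑ i, ∑ j, (if i = j then 0 else overlap (σ i) (σ j))
      = (n : ℝ)⁻¹ * ∑ s, spinSum (fun i => σ i s) ^ 2 - k := by
  have h : ∀ i j, (if i = j then 0 else overlap (σ i) (σ j))
      = overlap (σ i) (σ j) - if i = j then 1 else 0 := by
    intro i j
    split_ifs with hij
    · rw [hij, overlap_self hn, sub_self]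
    · rw [sub_zero]
  simp only [h, sum_sub_distrib, sum_ite_eq, mem_univ, if_true, sum_sum_overlap]
  simp

lemma Fintype.sum_prod_column_eq_pow {R ι α : Type*} [CommSemiring R] [Fintype ι]
    [DecidableEq ι] [Fintype α] {n : ℕ} (g : (ι → α) → R) :
    ∑ σ : ι → Fin n → α, ∏ s, g (fun i => σ i s) = (∑ δ, g δ) ^ n := by
  rw [Fintype.sum_pow]
  exact (Equiv.piComm fun (_ : ι) (_ : Fin n) => α).sum_comp (fun p => ∏ s, g (p s))

lemma mean_exp_sum_offDiag_overlap_eq {k n : ℕ} (hn : n ≠ 0) (β : ℝ) :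
    ((2 : ℝ) ^ (n * k))⁻¹ * ∑ σ : Fin k → Fin n → Bool,
        exp (β * ∑ i, ∑ j, if i = j then 0 else overlap (σ i) (σ j))
      = exp (-(k * β)) * mgfSpinSumSq k (β / n) ^ n := by
  have h : ∀ σ : Fin k → Fin n → Bool,
      exp (β * ∑ i, ∑ j, if i = j then 0 else overlap (σ i) (σ j))
        = exp (-(k * β)) * ∏ s, exp (β / n * spinSum (fun i => σ i s) ^ 2) := by
    intro σ
    rw [sum_offDiag_overlap hn, ← exp_sum, ← exp_add, ← mul_sum]
    ring_nf
  rw [sum_congr rfl fun σ _ => h σ, ← mul_sum,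
    Fintype.sum_prod_column_eq_pow (fun δ => exp (β / n * spinSum δ ^ 2)), mgfSpinSumSq,
    mul_pow, pow_mul, inv_pow]
  ring

theorem overlap_sum_mgf_asymptotics_general (k : ℕ) (β : ℕ → ℝ)
    (hβ : ∀ n, 0 ≤ β n)
    (hβn : Tendsto (fun n : ℕ => β n / n) atTop (nhds 0)) :
    ∃ C > (0 : ℝ), ∃ N : ℕ, ∀ n ≥ N, ∃ e : ℝ,
      |e| ≤ C * (β n) ^ 3 / (n : ℝ) ^ 2 ∧
      ((2 : ℝ) ^ (n * k))⁻¹ *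
          ∑ σ : Fin k → Fin n → Bool,
            Real.exp (β n * ∑ i, ∑ j, if i = j then 0 else overlap (σ i) (σ j))
        = Real.exp ((k : ℝ) * ((k : ℝ) - 1) / n * (β n) ^ 2 + e) := by
  set f : ℝ → ℝ := fun t => log (mgfSpinSumSq k t) - (k * t + k * (k - 1) * t ^ 2) with hf
  obtain ⟨C, hC, hfC⟩ := (log_mgfSpinSumSq_sub_isBigO k).exists_pos
  obtain ⟨N, hN⟩ := eventually_atTop.1 ((hβn.eventually hfC.bound).and (eventually_ne_atTop 0))
  refine ⟨C, hC, N, fun n hn => ?_⟩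
  obtain ⟨hbound, hn0⟩ := hN n hn
  refine ⟨n * f (β n / n), ?_, ?_⟩
  · calc |n * f (β n / n)| = n * |f (β n / n)| := by rw [abs_mul, Nat.abs_cast]
        _ ≤ n * (C * (β n / n) ^ 3) := by
          gcongr
          simpa [abs_of_nonneg (hβ n), hf] using hbound
        _ = C * β n ^ 3 / n ^ 2 := by field_simp
  · rw [mean_exp_sum_offDiag_overlap_eq hn0, ← exp_log (mgfSpinSumSq_pos k _), ← exp_nat_mul,
      ← exp_add]
    congr 1
    simp only [hf]
    field_simp
    ring

/-- For `β_n ≥ 0` with `β_n = o(n)` and uniformly random `σ^(1),…,σ^(k) ∈ {−1,+1}^n`,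
`E_k[exp(β_n ∑_{i≠j} q̃_{ij})] = exp((k(k−1)/n)β_n² + O(β_n³ n^{−2}))`. -/
theorem overlap_sum_mgf_asymptotics (k : ℕ) (hk : 0 < k) (β : ℕ → ℝ)
    (hβ : ∀ n, 0 ≤ β n)
    (hβn : Tendsto (fun n : ℕ => β n / n) atTop (nhds 0)) :
    ∃ C > (0 : ℝ), ∃ N : ℕ, ∀ n ≥ N, ∃ e : ℝ,
      |e| ≤ C * (β n) ^ 3 / (n : ℝ) ^ 2 ∧
      ((2 : ℝ) ^ (n * k))⁻¹ *
          ∑ σ : Fin k → Fin n → Bool,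
            Real.exp (β n * ∑ i, ∑ j, if i = j then 0 else overlap (σ i) (σ j))
        = Real.exp ((k : ℝ) * ((k : ℝ) - 1) / n * (β n) ^ 2 + e) :=
  overlap_sum_mgf_asymptotics_general k β hβ hβn
end

section
/- Let σ^(1),…,σ^(k) ∈ {−1,+1}^n be linearly independent over ℝ. Define vectors η^(i) ∈ {−1,+1}^{n²} by η^(i)_{(r,s)} = σ_r^(i) σ_s^(i). Then η^(1),…,η^(k) are linearly independent, and the k × k matrix C with entries C_{ij} = n·q(σ^(i),σ^(j))², where q(σ,σ') = (1/n)Σ_s σ_s σ'_s, is invertible. -/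
open Matrix

/-- If `σ^(1),…,σ^(k) ∈ {−1,+1}^n` are linearly independent, then the tensor-square
vectors `η^(i)_{(r,s)} = σ_r^(i) σ_s^(i)` are linearly independent and the SK covariance
matrix `C_{ij} = n·q(σ^(i),σ^(j))²` is invertible. -/
theorem sk_covariance_invertible (k n : ℕ) (σ : Fin k → Fin n → Bool)
    (hli : LinearIndependent ℝ (fun i : Fin k => fun s : Fin n => spin (σ i s))) :
    LinearIndependent ℝ
        (fun i : Fin k => fun p : Fin n × Fin n => spin (σ i p.1) * spin (σ i p.2)) ∧
      (Matrix.of fun i j : Fin k => (n : ℝ) * (overlap (σ i) (σ j)) ^ 2).det ≠ 0 := by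
  classical
  set x : Fin k → Fin n → ℝ := fun i s => spin (σ i s) with hxdef
  by_cases hk : k = 0
  · subst hk
    exact ⟨linearIndependent_empty_type, by simp [Matrix.det_isEmpty]⟩
  have hn : n ≠ 0 := by
    rintro rfl
    exact hli.ne_zero ⟨0, Nat.pos_of_ne_zero hk⟩ (funext fun s => s.elim0)
  -- The linear map sending coefficients to the linear combination of the `x i`.
  let f : (Fin k → ℝ) →ₗ[ℝ] (Fin n → ℝ) :=
    { toFun := fun c => ∑ i, c i • x i
      map_add' := by intro a b; simp [add_smul, Finset.sum_add_distrib]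
      map_smul' := by intro m a; simp [smul_smul, Finset.smul_sum] }
  have hfker : LinearMap.ker f = ⊥ := by
    rw [LinearMap.ker_eq_bot']
    intro c hc
    have hc' : ∑ i, c i • x i = 0 := hc
    exact funext (Fintype.linearIndependent_iff.mp hli c hc')
  obtain ⟨g, hg⟩ := f.exists_leftInverse_of_injective hfker
  set y : Fin k → Fin n → ℝ := fun j r => g (fun s => if r = s then 1 else 0) j with hydef
  have key1 : ∀ i j, ∑ r, x i r * y j r = (Pi.single i 1 : Fin k → ℝ) j := by
    intro i j
    have hfs : f (Pi.single i 1) = x i := by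
      show ∑ i', (Pi.single i 1 : Fin k → ℝ) i' • x i' = x i
      rw [Finset.sum_eq_single i]
      · simp
      · intro b _ hb; simp [Pi.single_apply, hb]
      · simp
    have h1 : g (x i) = Pi.single i 1 := by
      rw [← hfs]
      exact congrFun (congrArg DFunLike.coe hg) (Pi.single i 1)
    have h2 := LinearMap.pi_apply_eq_sum_univ g (x i)
    have h3 := congrFun h2 j
    rw [h1] at h3
    simpa [y, Finset.sum_apply, mul_comm] using h3.symm
  -- Part 1: linear independence of the tensor squares.
  have hLI : LinearIndependent ℝ
      (fun i : Fin k => fun p : Fin n × Fin n => x i p.1 * x i p.2) := by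
    let T : (Fin n × Fin n → ℝ) →ₗ[ℝ] (Fin k → ℝ) :=
      { toFun := fun M j => ∑ p : Fin n × Fin n, (y j p.1 * y j p.2) * M p
        map_add' := by
          intro a b; funext j; simp [mul_add, Finset.sum_add_distrib]
        map_smul' := by
          intro m a; funext j
          simp only [Pi.smul_apply, smul_eq_mul, RingHom.id_apply, Finset.mul_sum]
          exact Finset.sum_congr rfl fun p _ => by ring }
    apply LinearIndependent.of_comp T
    have hTη : (T ∘ fun i => fun p : Fin n × Fin n => x i p.1 * x i p.2)
        = fun i => Pi.single i (1 : ℝ) := by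
      funext i j
      show ∑ p : Fin n × Fin n, (y j p.1 * y j p.2) * (x i p.1 * x i p.2)
          = (Pi.single i 1 : Fin k → ℝ) j
      rw [Fintype.sum_prod_type]
      have hre : ∀ r s : Fin n,
          (y j r * y j s) * (x i r * x i s) = (x i r * y j r) * (x i s * y j s) :=
        fun r s => by ring
      simp_rw [hre]
      rw [← Finset.sum_mul_sum, key1]
      rcases eq_or_ne j i with h | h <;> simp [Pi.single_apply, h]
    rw [hTη]
    refine Fintype.linearIndependent_iff.mpr fun c hc j => ?_
    have := congrFun hc j
    simpa [Finset.sum_apply, Pi.single_apply] using this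
  refine ⟨hLI, ?_⟩
  -- Part 2: the matrix is `n⁻¹` times the Gram matrix of the tensor squares.
  set A : Matrix (Fin k) (Fin n × Fin n) ℝ :=
    Matrix.of (fun i p => x i p.1 * x i p.2) with hAdef
  have hnR : (n : ℝ) ≠ 0 := Nat.cast_ne_zero.mpr hn
  have hB : (Matrix.of fun i j : Fin k => (n : ℝ) * (overlap (σ i) (σ j)) ^ 2)
      = (n : ℝ)⁻¹ • (A * Aᵀ) := by
    ext i j
    have hsq : ∑ p : Fin n × Fin n, (x i p.1 * x i p.2) * (x j p.1 * x j p.2)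
        = (∑ s, x i s * x j s) ^ 2 := by
      rw [Fintype.sum_prod_type, sq, Finset.sum_mul_sum]
      exact Finset.sum_congr rfl fun r _ => Finset.sum_congr rfl fun s _ => by ring
    have hmul : (A * Aᵀ) i j = (∑ s, x i s * x j s) ^ 2 := by
      rw [← hsq, Matrix.mul_apply]
      exact Finset.sum_congr rfl fun p _ => rfl
    show (n : ℝ) * (overlap (σ i) (σ j)) ^ 2 = (n : ℝ)⁻¹ * (A * Aᵀ) i j
    rw [hmul, overlap]
    field_simp
    ring
  have hdet : (A * Aᵀ).det ≠ 0 := by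
    intro h
    obtain ⟨v, hv, hmul⟩ := (Matrix.exists_mulVec_eq_zero_iff).mpr h
    set w : Fin n × Fin n → ℝ := Aᵀ *ᵥ v with hwdef
    have h1 : v ⬝ᵥ ((A * Aᵀ) *ᵥ v) = 0 := by rw [hmul]; simp
    have h2 : v ⬝ᵥ ((A * Aᵀ) *ᵥ v) = ∑ p, w p ^ 2 := by
      rw [← Matrix.mulVec_mulVec, Matrix.dotProduct_mulVec, ← Matrix.mulVec_transpose]
      exact Finset.sum_congr rfl fun p _ => (sq (w p)).symm
    have hwzero : w = 0 := by
      have hsum : ∑ p, w p ^ 2 = 0 := by rw [← h2, h1]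
      funext p
      have := (Finset.sum_eq_zero_iff_of_nonneg
        (fun p _ => sq_nonneg (w p))).mp hsum p (Finset.mem_univ p)
      exact pow_eq_zero_iff two_ne_zero |>.mp this
    have hcomb : ∑ i, v i • (fun p : Fin n × Fin n => x i p.1 * x i p.2) = 0 := by
      funext p
      have := congrFun hwzero p
      simp only [hwdef, Matrix.mulVec, dotProduct, Matrix.transpose_apply,
        hAdef, Matrix.of_apply, Pi.zero_apply] at this ⊢
      rw [Finset.sum_apply]
      simpa [mul_comm] using this
    exact hv (funext (Fintype.linearIndependent_iff.mp hLI v hcomb))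
  rw [hB, Matrix.det_smul]
  exact mul_ne_zero (pow_ne_zero _ (inv_ne_zero hnR)) hdet
end
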